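/- Let α ∈ [0,1) and let n ≥ 5 be an integer. Then the A_α-spectral radius ρ_α(K₁ ∨ (K_{n−3} ∪ 2K₁)) equals the largest real root of φ(x) = 0, where φ(x) = x³ − ((α+1)n + α − 4)x² + (αn² + (α²−2α−1)n − 2α + 1)x − α²n² + (5α²−3α+2)n − 10α² + 15α − 8. -/

import Mathlib

open Finset

/-- The join `G ∨g H` of two graphs: the disjoint union together with all edges
between the two parts. -/
def SimpleGraph.gjoin {α β : Type*} (G : SimpleGraph α) (H : SimpleGraph β) :
    SimpleGraph (α ⊕ β) where
  Adj u v := match u, v with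
    | Sum.inl u, Sum.inl v => G.Adj u v
    | Sum.inr u, Sum.inr v => H.Adj u v
    | _, _ => True
  symm := ⟨fun u v => match u, v with
    | Sum.inl u, Sum.inl v => G.adj_symm
    | Sum.inr u, Sum.inr v => H.adj_symm
    | Sum.inl _, Sum.inr _ | Sum.inr _, Sum.inl _ => fun _ => trivial⟩
  loopless := ⟨fun u => by cases u <;> simp⟩

infixl:60 " ∨g " => SimpleGraph.gjoin

/-- The `A_α`-matrix `α • D(G) + (1-α) • A(G)` of a graph `G`. -/
noncomputable def aAlphaMatrix {V : Type*} [Fintype V] [DecidableEq V]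
    (α : ℝ) (G : SimpleGraph V) : Matrix V V ℝ := by
  classical
  exact α • Matrix.diagonal (fun v => (G.degree v : ℝ)) + (1 - α) • G.adjMatrix ℝ

/-- The `A_α`-spectral radius `ρ_α(G)`: the largest eigenvalue of `A_α(G)`. -/
noncomputable def rhoAlpha {V : Type*} [Fintype V] [DecidableEq V]
    (α : ℝ) (G : SimpleGraph V) : ℝ :=
  sSup (spectrum ℝ (aAlphaMatrix α G))

/-- The signless Laplacian matrix `Q(G) = D(G) + A(G)`. -/
noncomputable def signlessLaplacian {V : Type*} [Fintype V] [DecidableEq V]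
    (G : SimpleGraph V) : Matrix V V ℝ := by
  classical
  exact Matrix.diagonal (fun v => (G.degree v : ℝ)) + G.adjMatrix ℝ

/-- `q(G)`: the largest eigenvalue of the signless Laplacian matrix of `G`. -/
noncomputable def qIndex {V : Type*} [Fintype V] [DecidableEq V]
    (G : SimpleGraph V) : ℝ :=
  sSup (spectrum ℝ (signlessLaplacian G))

/-- The number of edges (the size) of a graph. -/
noncomputable def edgeCount {V : Type*} [Fintype V] [DecidableEq V]
    (G : SimpleGraph V) : ℕ := by
  classical
  exact G.edgeFinset.card

/-- `i(G - S)`: the number of isolated vertices of the graph obtained from `G`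
by deleting the vertices of `S` together with all edges incident to `S`. -/
noncomputable def isolGminus {V : Type*} [Fintype V] [DecidableEq V]
    (G : SimpleGraph V) (S : Finset V) : ℕ := by
  classical
  exact (Finset.univ.filter (fun v => v ∉ S ∧ ∀ u, G.Adj v u → u ∈ S)).card

/-- `F(n)`: the edge bound from Theorem 1.1. -/
def Fbound (n : ℕ) : ℕ :=
  if n = 6 then 9 else if n = 8 then 18 else (n - 2).choose 2 + 2

/-- `f(α)`: the order bound from Theorem 1.2. -/
noncomputable def fAlpha (α : ℝ) : ℝ :=
  if α ≤ 1 / 2 then 20 else if α ≤ 5 / 7 then 25 else 7 / (1 - α) + 3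

/-- The graph `K₁ ∨ (K_{n-3} ∪ 2K₁)`. -/
def G2 (n : ℕ) : SimpleGraph (Fin 1 ⊕ (Fin (n - 3) ⊕ Fin 2)) :=
  (⊤ : SimpleGraph (Fin 1)) ∨g ((⊤ : SimpleGraph (Fin (n - 3))) ⊕g (⊥ : SimpleGraph (Fin 2)))

/-!
If a symmetric nonnegative matrix has an entrywise positive eigenvector for `r`, then `r` is its
largest eigenvalue (pair any eigenvector, taken in absolute value, with the positive one). So it
suffices to find a positive eigenvector of `A_α(K₁ ∨ (K_{n-3} ∪ 2K₁))`
whose eigenvalue is the largest root `r` of `φ`. Since `φ(n - 4 + α) < 0 < φ(n - 1)`, that root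
exceeds `n - 4 + α`, and the vector equal to `1`, `b`, `c` on the centre, the clique and the two
pendant vertices is a positive eigenvector for `r`, where `b` and `c` are solved from the
eigen-equations at the clique and pendant vertices; the equation at the centre is `φ(r) = 0`.
-/

open Matrix

namespace Matrix

variable {ι : Type*} [Fintype ι]

theorem mem_spectrum_iff_exists_mulVec_eq_smul [DecidableEq ι] {K : Type*} [Field K]
    (A : Matrix ι ι K) (μ : K) :
    μ ∈ spectrum K A ↔ ∃ v ≠ 0, A *ᵥ v = μ • v := by
  rw [← spectrum_toLin', ← Module.End.hasEigenvalue_iff_mem_spectrum]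
  constructor
  · intro h
    obtain ⟨v, hv⟩ := h.exists_hasEigenvector
    exact ⟨v, hv.2, by simpa using Module.End.mem_eigenspace_iff.mp hv.1⟩
  · rintro ⟨v, hv, hAv⟩
    exact Module.End.hasEigenvalue_of_hasEigenvector
      ⟨Module.End.mem_eigenspace_iff.mpr (by simpa using hAv), hv⟩

theorem abs_le_of_mulVec_eq_smul_of_vecMul_eq_smul {A : Matrix ι ι ℝ} (hA : ∀ i j, 0 ≤ A i j)
    {w : ι → ℝ} (hw : ∀ i, 0 < w i) {r : ℝ} (hwA : w ᵥ* A = r • w)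
    {v : ι → ℝ} (hv : v ≠ 0) {μ : ℝ} (hAv : A *ᵥ v = μ • v) : |μ| ≤ r := by
  set u : ι → ℝ := fun i => |v i|
  have hAu : ∀ i, |μ| * u i ≤ (A *ᵥ u) i := fun i => calc
    |μ| * u i = |(A *ᵥ v) i| := by simp [u, hAv, abs_mul]
    _ ≤ ∑ j, |A i j * v j| := Finset.abs_sum_le_sum_abs _ _
    _ = (A *ᵥ u) i := by simp [mulVec, dotProduct, abs_mul, abs_of_nonneg (hA _ _), u]
  have hwu : 0 < w ⬝ᵥ u := by
    obtain ⟨i, hi⟩ := Function.ne_iff.mp hv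
    exact Finset.sum_pos' (fun j _ => mul_nonneg (hw j).le (abs_nonneg _))
      ⟨i, Finset.mem_univ _, mul_pos (hw i) (abs_pos.mpr hi)⟩
  have hμ : |μ| * (w ⬝ᵥ u) ≤ r * (w ⬝ᵥ u) := calc
    |μ| * (w ⬝ᵥ u) = ∑ i, w i * (|μ| * u i) := by
      rw [dotProduct, Finset.mul_sum]
      exact Finset.sum_congr rfl fun i _ => mul_left_comm _ _ _
    _ ≤ ∑ i, w i * (A *ᵥ u) i :=
      Finset.sum_le_sum fun i _ => mul_le_mul_of_nonneg_left (hAu i) (hw i).le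
    _ = r * (w ⬝ᵥ u) := by
      rw [← dotProduct, dotProduct_mulVec, hwA, smul_dotProduct, smul_eq_mul]
  exact le_of_mul_le_mul_right hμ hwu

theorem IsSymm.isGreatest_spectrum_of_mulVec_eq_smul [DecidableEq ι] [Nonempty ι]
    {A : Matrix ι ι ℝ} (hsymm : A.IsSymm) (hA : ∀ i j, 0 ≤ A i j) {w : ι → ℝ}
    (hw : ∀ i, 0 < w i) {r : ℝ} (hAw : A *ᵥ w = r • w) :
    IsGreatest (spectrum ℝ A) r := by
  have hwA : w ᵥ* A = r • w := by rw [← hsymm.eq, vecMul_transpose, hAw]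
  refine ⟨(mem_spectrum_iff_exists_mulVec_eq_smul A r).mpr ⟨w, ?_, hAw⟩, fun μ hμ => ?_⟩
  · exact fun h => (hw (Classical.arbitrary ι)).ne' (by simp [h])
  · obtain ⟨v, hv, hAv⟩ := (mem_spectrum_iff_exists_mulVec_eq_smul A μ).mp hμ
    exact (le_abs_self μ).trans (abs_le_of_mulVec_eq_smul_of_vecMul_eq_smul hA hw hwA hv hAv)

end Matrix

namespace SimpleGraph

variable {α β : Type*} (G : SimpleGraph α) (H : SimpleGraph β)

@[simp] lemma gjoin_adj_inl_inl {a a' : α} : (G ∨g H).Adj (.inl a) (.inl a') ↔ G.Adj a a' :=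
  Iff.rfl

@[simp] lemma gjoin_adj_inr_inr {b b' : β} : (G ∨g H).Adj (.inr b) (.inr b') ↔ H.Adj b b' :=
  Iff.rfl

@[simp] lemma gjoin_adj_inl_inr (a : α) (b : β) : (G ∨g H).Adj (.inl a) (.inr b) := trivial

@[simp] lemma gjoin_adj_inr_inl (a : α) (b : β) : (G ∨g H).Adj (.inr b) (.inl a) := trivial

instance [DecidableRel G.Adj] [DecidableRel H.Adj] : DecidableRel (G ∨g H).Adj
  | .inl a, .inl a' => decidable_of_iff (G.Adj a a') Iff.rfl
  | .inr b, .inr b' => decidable_of_iff (H.Adj b b') Iff.rfl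
  | .inl _, .inr _ | .inr _, .inl _ => isTrue trivial

instance [DecidableRel G.Adj] [DecidableRel H.Adj] : DecidableRel (G ⊕g H).Adj
  | .inl a, .inl a' => decidable_of_iff (G.Adj a a') sum_adj_inl.symm
  | .inr b, .inr b' => decidable_of_iff (H.Adj b b') sum_adj_inr.symm
  | .inl _, .inr _ | .inr _, .inl _ => isFalse (by simp)

end SimpleGraph

section AAlpha

variable {V : Type*} [Fintype V] [DecidableEq V]

lemma aAlphaMatrix_isSymm (α : ℝ) (G : SimpleGraph V) : (aAlphaMatrix α G).IsSymm := by
  classical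
  exact ((isSymm_diagonal _).smul α).add (G.isSymm_adjMatrix.smul (1 - α))

lemma aAlphaMatrix_nonneg {α : ℝ} (hα0 : 0 ≤ α) (hα1 : α ≤ 1) (G : SimpleGraph V) (i j : V) :
    0 ≤ aAlphaMatrix α G i j := by
  classical
  have : 0 ≤ 1 - α := sub_nonneg.mpr hα1
  simp only [aAlphaMatrix, Matrix.add_apply, Matrix.smul_apply, diagonal_apply,
    SimpleGraph.adjMatrix_apply, smul_eq_mul]
  split_ifs <;> positivity

lemma aAlphaMatrix_mulVec_apply (α : ℝ) (G : SimpleGraph V) [DecidableRel G.Adj] (w : V → ℝ)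
    (v : V) :
    (aAlphaMatrix α G *ᵥ w) v = ∑ u, if G.Adj v u then α * w v + (1 - α) * w u else 0 := by
  simp only [aAlphaMatrix, add_mulVec, smul_mulVec, mulVec_diagonal, Pi.add_apply,
    Pi.smul_apply, smul_eq_mul, SimpleGraph.adjMatrix_mulVec_apply,
    ← SimpleGraph.card_neighborFinset_eq_degree, SimpleGraph.neighborFinset_eq_filter]
  rw [← Finset.sum_filter, Finset.sum_add_distrib, Finset.sum_const, nsmul_eq_mul, ← Finset.mul_sum,
    mul_left_comm]
  -- the two sides filter with different `Decidable` instances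
  congr!

lemma rhoAlpha_eq_of_mulVec_eq_smul [Nonempty V] {α : ℝ} (hα0 : 0 ≤ α) (hα1 : α ≤ 1)
    {G : SimpleGraph V} {w : V → ℝ} (hw : ∀ v, 0 < w v) {r : ℝ}
    (hGw : aAlphaMatrix α G *ᵥ w = r • w) : rhoAlpha α G = r :=
  ((aAlphaMatrix_isSymm α G).isGreatest_spectrum_of_mulVec_eq_smul
    (aAlphaMatrix_nonneg hα0 hα1 G) hw hGw).csSup_eq

end AAlpha

open Polynomial in
theorem Polynomial.exists_isGreatest_setOf_isRoot_gt {p : ℝ[X]} {a b : ℝ} (hab : a ≤ b)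
    (ha : p.eval a < 0) (hb : 0 < p.eval b) : ∃ r, IsGreatest {x | p.IsRoot x} r ∧ a < r := by
  have hp : p ≠ 0 := fun h => hb.ne' (by simp [h])
  have hfin := finite_setOfPred_isRoot hp
  obtain ⟨x, hx, hxroot⟩ := intermediate_value_Icc hab p.continuous.continuousOn ⟨ha.le, hb.le⟩
  have hne : {x | p.IsRoot x}.Nonempty := ⟨x, hxroot⟩
  have hr : IsGreatest {x | p.IsRoot x} (sSup {x | p.IsRoot x}) :=
    ⟨hne.csSup_mem hfin, fun y hy => le_csSup hfin.bddAbove hy⟩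
  refine ⟨_, hr, lt_of_lt_of_le ?_ (hr.2 hxroot)⟩
  exact lt_of_le_of_ne hx.1 fun h => ha.ne (h ▸ hxroot)

section G2

open Polynomial

noncomputable def phiPoly (α N : ℝ) : ℝ[X] :=
  X ^ 3 - C ((α + 1) * N + α - 4) * X ^ 2
    + C (α * N ^ 2 + (α ^ 2 - 2 * α - 1) * N - 2 * α + 1) * X
    + C (-α ^ 2 * N ^ 2 + (5 * α ^ 2 - 3 * α + 2) * N - 10 * α ^ 2 + 15 * α - 8)

lemma eval_phiPoly (α N x : ℝ) :
    (phiPoly α N).eval x = x ^ 3 - ((α + 1) * N + α - 4) * x ^ 2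
      + (α * N ^ 2 + (α ^ 2 - 2 * α - 1) * N - 2 * α + 1) * x
      - α ^ 2 * N ^ 2 + (5 * α ^ 2 - 3 * α + 2) * N - 10 * α ^ 2 + 15 * α - 8 := by
  simp only [phiPoly, eval_add, eval_sub, eval_mul, eval_pow, eval_C, eval_X]
  ring

lemma eval_phiPoly_sub_four_add_neg {α N : ℝ} (hα : α < 1) (hN : 4 < N) :
    (phiPoly α N).eval (N - 4 + α) < 0 := by
  have : 0 < (1 - α) ^ 2 * (N - 3) * (N - 4) := by
    have := sub_pos.mpr hα
    have : 0 < N - 4 := sub_pos.mpr hN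
    have : 0 < N - 3 := by linarith
    positivity
  linarith [show (phiPoly α N).eval (N - 4 + α) = -((1 - α) ^ 2 * (N - 3) * (N - 4)) by
    rw [eval_phiPoly]; ring]

lemma eval_phiPoly_sub_one_pos {α N : ℝ} (hα : α < 1) (hN : 4 < N) :
    0 < (phiPoly α N).eval (N - 1) := by
  have h : (1 - α) * (3 - α) < (N - α) * (N - 1 - α) := by nlinarith
  have : (phiPoly α N).eval (N - 1)
      = 2 * (1 - α) * ((N - α) * (N - 1 - α) - (1 - α) * (3 - α)) := by
    rw [eval_phiPoly]; ring
  rw [this]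
  have := sub_pos.mpr hα
  have := sub_pos.mpr h
  positivity

/-- The clique and pendant entries solve the eigen-equations `(A_α x)_v = r x_v` at those
vertices. -/
noncomputable def G2PerronVector (α r : ℝ) (n : ℕ) : Fin 1 ⊕ (Fin (n - 3) ⊕ Fin 2) → ℝ :=
  Sum.elim (fun _ => 1) (Sum.elim (fun _ => (1 - α) / (r - (n - 4 + α))) fun _ => (1 - α) / (r - α))

lemma G2PerronVector_pos {α r : ℝ} {n : ℕ} (hα : α < 1) (hrα : α < r) (hrn : n - 4 + α < r) :
    ∀ v, 0 < G2PerronVector α r n v := by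
  have := sub_pos.mpr hα
  have := sub_pos.mpr hrα
  have := sub_pos.mpr hrn
  rintro (_ | _ | _) <;> simp only [G2PerronVector, Sum.elim_inl, Sum.elim_inr] <;> positivity

lemma aAlphaMatrix_G2_mulVec_sumElim (α b c : ℝ) {n : ℕ} (hn : 3 ≤ n) :
    aAlphaMatrix α (G2 n) *ᵥ Sum.elim (fun _ => 1) (Sum.elim (fun _ => b) fun _ => c) =
      Sum.elim (fun _ => α * (n - 1) + (1 - α) * ((n - 3) * b + 2 * c))
        (Sum.elim (fun _ => α * (n - 3) * b + (1 - α) * (1 + (n - 4) * b))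
          fun _ => α * c + (1 - α)) := by
  ext (i | i | i) <;>
    simp only [aAlphaMatrix_mulVec_apply, G2, Fintype.sum_sum_type,
      SimpleGraph.gjoin_adj_inl_inl, SimpleGraph.gjoin_adj_inl_inr, SimpleGraph.gjoin_adj_inr_inl,
      SimpleGraph.gjoin_adj_inr_inr, SimpleGraph.sum_adj, SimpleGraph.top_adj, SimpleGraph.bot_adj,
      Sum.elim_inl, Sum.elim_inr, ne_eq, Fin.fin_one_eq_zero, not_true_eq_false, if_true, if_false,
      Finset.sum_const_zero, Finset.sum_const, Finset.card_univ, Fintype.card_fin, nsmul_eq_mul]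
  · rw [Nat.cast_sub hn]
    ring
  · rw [Finset.sum_ite, Finset.filter_ne, Finset.sum_const, Finset.sum_const_zero,
      Finset.card_erase_of_mem (Finset.mem_univ i), Finset.card_univ, Fintype.card_fin,
      nsmul_eq_mul, Nat.cast_pred i.pos, Nat.cast_sub hn]
    ring
  · ring

lemma aAlphaMatrix_G2_mulVec_perronVector {α r : ℝ} {n : ℕ} (hn : 3 ≤ n)
    (hr : (phiPoly α n).IsRoot r) (hrα : r ≠ α) (hrn : r ≠ n - 4 + α) :
    aAlphaMatrix α (G2 n) *ᵥ G2PerronVector α r n = r • G2PerronVector α r n := by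
  have hrα' : r - α ≠ 0 := sub_ne_zero.mpr hrα
  have hrn' : r - (n - 4 + α) ≠ 0 := sub_ne_zero.mpr hrn
  rw [IsRoot, eval_phiPoly] at hr
  rw [G2PerronVector, aAlphaMatrix_G2_mulVec_sumElim _ _ _ hn]
  ext (i | i | i) <;> simp only [Sum.elim_inl, Sum.elim_inr, Pi.smul_apply, smul_eq_mul] <;>
    field_simp
  · linear_combination -hr
  · ring
  · ring

end G2

theorem rhoAlpha_G2_largest_root (α : ℝ) (hα0 : 0 ≤ α) (hα1 : α < 1)
    (n : ℕ) (hn : 5 ≤ n) :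
    IsGreatest {x : ℝ | x ^ 3 - ((α + 1) * (n : ℝ) + α - 4) * x ^ 2
        + (α * (n : ℝ) ^ 2 + (α ^ 2 - 2 * α - 1) * (n : ℝ) - 2 * α + 1) * x
        - α ^ 2 * (n : ℝ) ^ 2 + (5 * α ^ 2 - 3 * α + 2) * (n : ℝ)
        - 10 * α ^ 2 + 15 * α - 8 = 0} (rhoAlpha α (G2 n)) := by
  have hn4 : (4 : ℝ) < n := by exact_mod_cast hn
  obtain ⟨r, hr, hrn⟩ := Polynomial.exists_isGreatest_setOf_isRoot_gt (by linarith)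
    (eval_phiPoly_sub_four_add_neg hα1 hn4) (eval_phiPoly_sub_one_pos hα1 hn4)
  have hrα : α < r := by linarith
  rw [rhoAlpha_eq_of_mulVec_eq_smul hα0 hα1.le (G2PerronVector_pos hα1 hrα hrn)
    (aAlphaMatrix_G2_mulVec_perronVector (by omega) hr.1 hrα.ne' hrn.ne')]
  simpa [Polynomial.IsRoot, eval_phiPoly] using hr
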